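/- Let $\mathscr{D}$ be the standard dyadic grid, $\sigma_1,\dots,\sigma_m$ weights, $1<p_1,\dots,p_m<\infty$, $\frac1p=\sum_i \frac1{p_i}$, $p\in(1,\infty)$. If the nonnegative numbers $\{a_Q\}$ satisfy $\sum_{Q\subset R} a_Q \le A\int_R\prod_{i=1}^m \sigma_i^{p/p_i}$ for all $R\in\mathscr{D}$, then $\Big(\sum_{Q\in\mathscr{D}} a_Q\prod_{i=1}^m\Big(\frac{1}{\sigma_i(Q)}\int_Q f_i\sigma_i\Big)^p\Big)^{1/p}\le A^{1/p}\prod_{i=1}^m p_i'\,\|f_i\|_{L^{p_i}(\sigma_i)}$ for all nonnegative $f_i\in L^{p_i}(\sigma_i)$. -/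

import Mathlib

open MeasureTheory ENNReal

noncomputable section

/-- Points of `ℝⁿ`. -/
abbrev Rn (n : ℕ) := Fin n → ℝ

/-- The half-open cube with corner `c` and sidelength `h`. -/
def cube {n : ℕ} (c : Rn n) (h : ℝ) : Set (Rn n) :=
  Set.univ.pi fun i => Set.Ico (c i) (c i + h)

/-- `Q` is a (half-open, axis-parallel) cube. -/
def IsCube {n : ℕ} (Q : Set (Rn n)) : Prop := ∃ c h, 0 < h ∧ Q = cube c h

/-- The dyadic cube `2^{-k}([0,1)^n + j)` of the standard dyadic grid. -/
def dyadicCube {n : ℕ} (k : ℤ) (j : Fin n → ℤ) : Set (Rn n) :=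
  cube (fun i => (j i : ℝ) * (2:ℝ) ^ (-k)) ((2:ℝ) ^ (-k))

/-- `Q` belongs to the standard dyadic grid `𝒟`. -/
def IsDyadicCube {n : ℕ} (Q : Set (Rn n)) : Prop := ∃ k j, Q = dyadicCube k j

/-- `∫_Q g` of a (nonnegative) real function, as an element of `ℝ≥0∞`. -/
def setInt {n : ℕ} (Q : Set (Rn n)) (g : Rn n → ℝ) : ℝ≥0∞ :=
  ∫⁻ x in Q, ENNReal.ofReal (g x)

/-- The average `(1/|Q|)∫_Q g`. -/
def avg {n : ℕ} (Q : Set (Rn n)) (g : Rn n → ℝ) : ℝ≥0∞ := setInt Q g / volume Q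

/-- The weighted average `(1/σ(Q)) ∫_Q f σ`. -/
def wAvg {n : ℕ} (Q : Set (Rn n)) (σ f : Rn n → ℝ) : ℝ≥0∞ :=
  setInt Q (fun x => f x * σ x) / setInt Q σ

/-- The dyadic weighted multisublinear maximal operator `𝓜^d_{⃗σ}`. -/
def Mdw {n m : ℕ} (σ f : Fin m → Rn n → ℝ) (x : Rn n) : ℝ≥0∞ :=
  ⨆ (Q : Set (Rn n)) (_ : IsDyadicCube Q) (_ : x ∈ Q), ∏ i, wAvg Q (σ i) (f i)

/-- The dyadic weighted maximal operator `M^d_σ`. -/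
def Mdw1 {n : ℕ} (σ f : Rn n → ℝ) (x : Rn n) : ℝ≥0∞ :=
  ⨆ (Q : Set (Rn n)) (_ : IsDyadicCube Q) (_ : x ∈ Q), wAvg Q σ f

/-- The multisublinear maximal operator `𝓜` over all cubes. -/
def MM {n m : ℕ} (f : Fin m → Rn n → ℝ) (x : Rn n) : ℝ≥0∞ :=
  ⨆ (Q : Set (Rn n)) (_ : IsCube Q) (_ : x ∈ Q), ∏ i, avg Q (f i)

/-- The dyadic multisublinear maximal operator `𝓜^d`. -/
def MMd {n m : ℕ} (f : Fin m → Rn n → ℝ) (x : Rn n) : ℝ≥0∞ :=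
  ⨆ (Q : Set (Rn n)) (_ : IsDyadicCube Q) (_ : x ∈ Q), ∏ i, avg Q (f i)

/-- The Hardy–Littlewood maximal operator (over all cubes). -/
def HLM {n : ℕ} (g : Rn n → ℝ) (x : Rn n) : ℝ≥0∞ :=
  ⨆ (Q : Set (Rn n)) (_ : IsCube Q) (_ : x ∈ Q), avg Q g

/-- `(∫ g^p v dx)^{1/p}` for an `ℝ≥0∞`-valued `g`. -/
def nLp {n : ℕ} (p : ℝ) (v : Rn n → ℝ) (g : Rn n → ℝ≥0∞) : ℝ≥0∞ :=
  (∫⁻ x, g x ^ p * ENNReal.ofReal (v x)) ^ (1/p)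

/-- The `L^p(v)` norm of a (nonnegative) real function. -/
def nLpR {n : ℕ} (p : ℝ) (v f : Rn n → ℝ) : ℝ≥0∞ :=
  nLp p v (fun x => ENNReal.ofReal (f x))

/-- The conjugate exponent `q' = q/(q-1)`. -/
def conjExp (q : ℝ) : ℝ := q / (q - 1)

/-- The dual weights `σ_i = w_i^{1-p_i'}`. -/
def dualW {n m : ℕ} (p : Fin m → ℝ) (w : Fin m → Rn n → ℝ) : Fin m → Rn n → ℝ :=
  fun i x => w i x ^ (1 - conjExp (p i))

/-- The geometric average `exp((1/|Q|)∫_Q log g)`, realized (in the extended sense)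
as `inf_{r>0} ((1/|Q|)∫_Q g^r)^{1/r}`. -/
def expLogAvg {n : ℕ} (Q : Set (Rn n)) (g : Rn n → ℝ) : ℝ≥0∞ :=
  ⨅ (r : ℝ) (_ : 0 < r), ((∫⁻ x in Q, ENNReal.ofReal (g x) ^ r) / volume Q) ^ (1/r)

/-- A sparse family of cubes indexed by `ℤ × J`. -/
def IsSparse {n : ℕ} (J : Type) (Q : ℤ → J → Set (Rn n)) : Prop :=
  (∀ (k : ℤ) (j j' : J), j ≠ j' → Q k j ∩ Q k j' = ∅) ∧
  (∀ k : ℤ, (⋃ j, Q (k+1) j) ⊆ ⋃ j, Q k j) ∧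
  (∀ (k : ℤ) (j : J), volume ((⋃ j', Q (k+1) j') ∩ Q k j) ≤ volume (Q k j) / 2)

/-- A general dyadic grid. -/
def IsDyadicGrid {n : ℕ} (G : Set (Set (Rn n))) : Prop :=
  (∀ Q ∈ G, ∃ (k : ℤ) (c : Rn n), Q = cube c ((2:ℝ) ^ k)) ∧
  (∀ Q ∈ G, ∀ R ∈ G, Q ∩ R = Q ∨ Q ∩ R = R ∨ Q ∩ R = ∅) ∧
  (∀ k : ℤ,
    ⋃₀ {Q | Q ∈ G ∧ ∃ c, Q = cube c ((2:ℝ) ^ k)} = Set.univ ∧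
    {Q | Q ∈ G ∧ ∃ c, Q = cube c ((2:ℝ) ^ k)}.Pairwise fun Q R => Q ∩ R = ∅)

/-!
Restrict to a finite family `F` of dyadic cubes and put `λ_Q = ∏ᵢ ⟨fᵢ⟩_{σᵢ,Q}`. By the
layer-cake formula `∑ a_Q λ_Q^p` is an integral over `t` of `∑_{λ_Q > t} a_Q`. The cubes with
`λ_Q > t` are covered by the maximal ones among them, which are pairwise disjoint, so the Carleson
condition bounds this by `A · G {M λ > t}`, where `G = ∏ σᵢ^{p/pᵢ} dx` and `M` is the maximal
function over `F`. Hence the sum is at most `A ∫ (M λ)^p dG ≤ A ∫ ∏ (M_{σᵢ} fᵢ)^p σᵢ^{p/pᵢ}`, and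
Hölder with the exponents `pᵢ/p` reduces everything to the dyadic weighted maximal inequality
`‖M_σ f‖_{L^q(σ)} ≤ q' ‖f‖_{L^q(σ)}`. The latter follows, again through maximal cubes, from the
weak-type bound `t σ{M_σ f > t} ≤ ∫_{M_σ f > t} f σ`, the layer-cake formula and Hölder.
Finally `F` exhausts the dyadic grid.
-/

open Set

section DyadicGeometry

variable {n : ℕ}

lemma mem_dyadicCube_iff_floor {k : ℤ} {j : Fin n → ℤ} {x : Rn n} :
    x ∈ dyadicCube k j ↔ ∀ i, ⌊x i * 2 ^ k⌋ = j i := by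
  have h2 : (0:ℝ) < 2 ^ k := zpow_pos two_pos k
  simp only [dyadicCube, cube, mem_univ_pi, mem_Ico, Int.floor_eq_iff]
  refine forall_congr' fun i => and_congr ?_ ?_
  · rw [zpow_neg, ← div_eq_mul_inv, div_le_iff₀ h2]
  · rw [zpow_neg, ← div_eq_mul_inv, ← one_div, ← _root_.add_div, lt_div_iff₀ h2]

lemma floor_mul_two_zpow_eq_ediv {k k' : ℤ} (hk : k ≤ k') (y : ℝ) :
    ⌊y * 2 ^ k⌋ = ⌊y * 2 ^ k'⌋ / 2 ^ (k' - k).toNat := by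
  have h : y * 2 ^ k = y * 2 ^ k' / ((2 ^ (k' - k).toNat : ℕ) : ℝ) := by
    rw [Nat.cast_pow, Nat.cast_ofNat, ← zpow_natCast, Int.toNat_of_nonneg (sub_nonneg.2 hk),
      mul_div_assoc, ← zpow_sub₀ two_ne_zero, sub_sub_cancel k' k]
  rw [h, Int.floor_div_natCast]
  push_cast; rfl

lemma dyadicCube_subset_of_le {k k' : ℤ} {j j' : Fin n → ℤ} (hk : k ≤ k')
    (hQQ' : (dyadicCube k j ∩ dyadicCube k' j').Nonempty) : dyadicCube k' j' ⊆ dyadicCube k j := by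
  obtain ⟨x, hx, hx'⟩ := hQQ'
  intro z hz
  rw [mem_dyadicCube_iff_floor] at hx hx' hz ⊢
  intro i
  rw [← hx i, floor_mul_two_zpow_eq_ediv hk, floor_mul_two_zpow_eq_ediv hk, hz i, hx' i]

lemma IsDyadicCube.subset_or_subset {Q R : Set (Rn n)} (hQ : IsDyadicCube Q)
    (hR : IsDyadicCube R) (hQR : (Q ∩ R).Nonempty) : Q ⊆ R ∨ R ⊆ Q := by
  obtain ⟨k, j, rfl⟩ := hQ
  obtain ⟨k', j', rfl⟩ := hR
  rcases le_total k k' with h | h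
  · exact Or.inr (dyadicCube_subset_of_le h hQR)
  · exact Or.inl (dyadicCube_subset_of_le h (inter_comm _ _ ▸ hQR))

lemma IsDyadicCube.measurableSet {Q : Set (Rn n)} (hQ : IsDyadicCube Q) : MeasurableSet Q := by
  obtain ⟨k, j, rfl⟩ := hQ
  exact MeasurableSet.univ_pi fun i => measurableSet_Ico

lemma IsDyadicCube.isBounded {Q : Set (Rn n)} (hQ : IsDyadicCube Q) : Bornology.IsBounded Q := by
  obtain ⟨k, j, rfl⟩ := hQ
  refine (Metric.isBounded_Icc (fun i => (j i : ℝ) * 2 ^ (-k))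
    (fun i => (j i : ℝ) * 2 ^ (-k) + 2 ^ (-k))).subset ?_
  rw [← pi_univ_Icc]
  exact pi_mono fun i _ => Ico_subset_Icc_self

lemma IsDyadicCube.setInt_ne_top {Q : Set (Rn n)} (hQ : IsDyadicCube Q)
    {g : Rn n → ℝ} (hg : LocallyIntegrable g volume) : setInt Q g ≠ ∞ :=
  ((lintegral_ofReal_le_lintegral_enorm _).trans_lt
    ((hg.integrableOn_isCompact hQ.isBounded.isCompact_closure).mono_set subset_closure).2).ne

lemma exists_pairwiseDisjoint_subfamily_cover {S : Finset (Set (Rn n))}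
    (hS : ∀ Q ∈ S, IsDyadicCube Q) :
    ∃ S' ⊆ S, (S' : Set (Set (Rn n))).PairwiseDisjoint id ∧ ∀ Q ∈ S, ∃ R ∈ S', Q ⊆ R := by
  classical
  refine ⟨S.filter (Maximal (· ∈ S)), Finset.filter_subset _ _, ?_, fun Q hQ => ?_⟩
  · intro R hR R' hR' hne
    simp only [Finset.coe_filter, mem_ofPred_eq] at hR hR'
    refine Set.disjoint_iff_inter_eq_empty.2 (Set.not_nonempty_iff_eq_empty.1 fun hRR' => hne ?_)
    rcases (hS R hR.1).subset_or_subset (hS R' hR'.1) hRR' with h | h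
    · exact hR.2.eq_of_subset hR'.2.1 h
    · exact (hR'.2.eq_of_subset hR.2.1 h).symm
  · obtain ⟨R, hQR, hR⟩ := S.finite_toSet.exists_le_maximal hQ
    exact ⟨R, Finset.mem_filter.2 ⟨hR.1, hR⟩, hQR⟩

end DyadicGeometry

section MaximalFunction

variable {α : Type*}

def maximalFunction (F : Finset (Set α)) (g : Set α → ℝ≥0∞) (x : α) : ℝ≥0∞ :=
  ⨆ Q ∈ F, Q.indicator (fun _ => g Q) x

variable {F : Finset (Set α)} {g : Set α → ℝ≥0∞}

lemma lt_maximalFunction_iff {x : α} {t : ℝ≥0∞} :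
    t < maximalFunction F g x ↔ ∃ Q ∈ F, x ∈ Q ∧ t < g Q := by
  simp only [maximalFunction, lt_iSup_iff]
  refine exists_congr fun Q => ?_
  by_cases hx : x ∈ Q <;> simp [hx]

open Classical in
lemma setOf_lt_maximalFunction (t : ℝ≥0∞) :
    {x | t < maximalFunction F g x} = ⋃ Q ∈ F.filter (fun Q => t < g Q), Q := by
  ext x
  simp [lt_maximalFunction_iff, and_assoc, and_comm (a := x ∈ _)]

lemma maximalFunction_le_indicator (x : α) :
    maximalFunction F g x ≤ (⋃ Q ∈ F, Q).indicator (fun _ => F.sup g) x := by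
  refine iSup₂_le fun Q hQ => ?_
  by_cases hx : x ∈ Q
  · rw [indicator_of_mem hx, indicator_of_mem (mem_iUnion₂_of_mem hQ hx)]
    exact Finset.le_sup hQ
  · simp [hx]

lemma maximalFunction_prod_le {ι : Type*} (s : Finset ι) (w : ι → Set α → ℝ≥0∞) (x : α) :
    maximalFunction F (fun Q => ∏ i ∈ s, w i Q) x ≤ ∏ i ∈ s, maximalFunction F (w i) x := by
  refine iSup₂_le fun Q hQ => ?_
  by_cases hx : x ∈ Q
  · rw [indicator_of_mem hx]
    exact Finset.prod_le_prod' fun i _ => le_iSup₂_of_le Q hQ (by rw [indicator_of_mem hx])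
  · simp [hx]

lemma measurable_maximalFunction [MeasurableSpace α] (hF : ∀ Q ∈ F, MeasurableSet Q) :
    Measurable (maximalFunction F g) :=
  Measurable.biSup _ F.countable_toSet fun Q hQ => measurable_const.indicator (hF Q hQ)

end MaximalFunction

lemma biUnion_eq_of_subset_of_forall_subset {α : Type*} {S S' : Finset (Set α)} (hS' : S' ⊆ S)
    (hcover : ∀ Q ∈ S, ∃ R ∈ S', Q ⊆ R) : ⋃ R ∈ S', R = ⋃ Q ∈ S, Q := by
  refine (biUnion_subset_biUnion_left (Finset.coe_subset.2 hS')).antisymm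
    (iUnion₂_subset fun Q hQ => ?_)
  obtain ⟨R, hR, hQR⟩ := hcover Q hQ
  exact hQR.trans (subset_biUnion_of_mem (u := id) hR)

section LayerCake

variable {α : Type*} [MeasurableSpace α]

lemma rpow_eq_ofReal_mul_lintegral_indicator {q : ℝ} (hq : 0 < q) (c : ℝ≥0∞) :
    c ^ q = ENNReal.ofReal q *
      ∫⁻ t in Ioi 0,
        {t : ℝ | ENNReal.ofReal t < c}.indicator (fun t => ENNReal.ofReal (t ^ (q - 1))) t := by
  have hS : MeasurableSet {t : ℝ | ENNReal.ofReal t < c} :=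
    measurableSet_lt (by fun_prop) measurable_const
  rw [lintegral_indicator hS, Measure.restrict_restrict hS]
  rcases eq_or_ne c ∞ with rfl | hc
  · have hint : ∫⁻ t in Ioi (0:ℝ), ENNReal.ofReal (t ^ (q - 1)) = ∞ := by
      rw [← not_ne_iff, lintegral_ofReal_ne_top_iff_integrable (by fun_prop)
        ((ae_restrict_iff' measurableSet_Ioi).2 (ae_of_all _ fun t ht => Real.rpow_nonneg ht.le _))]
      exact not_integrableOn_Ioi_rpow _
    simp [hint, hq, ENNReal.mul_top]
  have hseteq : {t : ℝ | ENNReal.ofReal t < c} ∩ Ioi 0 = Ioo 0 c.toReal := by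
    ext t
    simp only [mem_inter_iff, mem_ofPred_eq, mem_Ioi, mem_Ioo]
    exact ⟨fun h => ⟨h.2, (ENNReal.ofReal_lt_iff_lt_toReal h.2.le hc).1 h.1⟩,
      fun h => ⟨(ENNReal.ofReal_lt_iff_lt_toReal h.1.le hc).2 h.2, h.1⟩⟩
  have hc0 : 0 ≤ c.toReal := ENNReal.toReal_nonneg
  have hq1 : (-1:ℝ) < q - 1 := by linarith
  have hint : IntegrableOn (fun t : ℝ => t ^ (q - 1)) (Ioo 0 c.toReal) :=
    (intervalIntegrable_iff_integrableOn_Ioo_of_le hc0).1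
      (intervalIntegral.intervalIntegrable_rpow' hq1)
  rw [hseteq, ← ofReal_integral_eq_lintegral_ofReal hint
    ((ae_restrict_iff' measurableSet_Ioo).2 (ae_of_all _ fun t ht => Real.rpow_nonneg ht.1.le _)),
    ← integral_Ioc_eq_integral_Ioo, ← intervalIntegral.integral_of_le hc0,
    integral_rpow (Or.inl hq1), sub_add_cancel, Real.zero_rpow hq.ne', sub_zero,
    ← ENNReal.ofReal_mul hq.le, mul_div_cancel₀ _ hq.ne', ← ENNReal.ofReal_rpow_of_nonneg hc0 hq.le,
    ENNReal.ofReal_toReal hc]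

open Classical in
lemma sum_mul_rpow_eq_lintegral {ι : Type*} (s : Finset ι) (a b : ι → ℝ≥0∞) {q : ℝ}
    (hq : 0 < q) :
    ∑ i ∈ s, a i * b i ^ q = ENNReal.ofReal q *
      ∫⁻ t in Ioi 0, (∑ i ∈ s.filter (fun i => ENNReal.ofReal t < b i), a i) *
        ENNReal.ofReal (t ^ (q - 1)) := by
  have hmeas (i : ι) : Measurable
      ({t : ℝ | ENNReal.ofReal t < b i}.indicator fun t => ENNReal.ofReal (t ^ (q - 1))) :=
    (by fun_prop : Measurable _).indicator (measurableSet_lt (by fun_prop) measurable_const)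
  simp_rw [rpow_eq_ofReal_mul_lintegral_indicator hq, mul_left_comm (a _), ← Finset.mul_sum,
    ← lintegral_const_mul _ (hmeas _), ← lintegral_finsetSum _ fun i _ => (hmeas i).const_mul _,
    Finset.sum_filter, Finset.sum_mul, indicator_apply, mul_ite, ite_mul, mul_zero, zero_mul]
  rfl

lemma lintegral_mul_rpow_eq_lintegral_setLIntegral (μ : Measure α) [SFinite μ] {q : ℝ}
    (hq : 0 < q) {w M : α → ℝ≥0∞} (hw : Measurable w) (hM : Measurable M) :
    ∫⁻ x, w x * M x ^ q ∂μ = ENNReal.ofReal q *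
      ∫⁻ t in Ioi 0,
        (∫⁻ x in {x | ENNReal.ofReal t < M x}, w x ∂μ) * ENNReal.ofReal (t ^ (q - 1)) := by
  set g : α → ℝ → ℝ≥0∞ := fun x t =>
    {t : ℝ | ENNReal.ofReal t < M x}.indicator (fun t => w x * ENNReal.ofReal (t ^ (q - 1))) t
  have hg : Measurable (Function.uncurry g) := by
    refine Measurable.ite ?_ (by fun_prop) measurable_const
    exact measurableSet_lt (by fun_prop) (hM.comp measurable_fst)
  have hx : ∀ x, w x * M x ^ q = ENNReal.ofReal q * ∫⁻ t in Ioi 0, g x t := fun x => by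
    rw [rpow_eq_ofReal_mul_lintegral_indicator hq, mul_left_comm,
      ← lintegral_const_mul _ ((by fun_prop : Measurable _).indicator
        (measurableSet_lt (by fun_prop) measurable_const))]
    simp only [g, indicator_apply, mul_ite, mul_zero]
  have ht : ∀ t, ∫⁻ x, g x t ∂μ =
      (∫⁻ x in {x | ENNReal.ofReal t < M x}, w x ∂μ) * ENNReal.ofReal (t ^ (q - 1)) := fun t => by
    rw [← lintegral_mul_const _ hw, ← lintegral_indicator (measurableSet_lt measurable_const hM)]
    rfl
  simp_rw [hx, ← ht]
  rw [lintegral_const_mul _ hg.lintegral_prod_right, lintegral_lintegral_swap hg.aemeasurable]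

lemma lintegral_rpow_eq_lintegral_measure_lt_mul (μ : Measure α) [SFinite μ] {q : ℝ}
    (hq : 0 < q) {M : α → ℝ≥0∞} (hM : Measurable M) :
    ∫⁻ x, M x ^ q ∂μ = ENNReal.ofReal q *
      ∫⁻ t in Ioi 0, μ {x | ENNReal.ofReal t < M x} * ENNReal.ofReal (t ^ (q - 1)) := by
  simpa only [Pi.one_apply, one_mul, setLIntegral_one] using
    lintegral_mul_rpow_eq_lintegral_setLIntegral μ hq measurable_const hM (w := 1)

lemma lintegral_maximalFunction_rpow_ne_top {μ : Measure α}
    {F : Finset (Set α)} {g : Set α → ℝ≥0∞} (hF : ∀ Q ∈ F, MeasurableSet Q)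
    (hg : ∀ Q ∈ F, g Q ≠ ∞) (hμ : ∀ Q ∈ F, μ Q ≠ ∞) {p : ℝ} (hp : 0 < p) :
    ∫⁻ x, maximalFunction F g x ^ p ∂μ ≠ ∞ := by
  have hU : MeasurableSet (⋃ Q ∈ F, Q) := F.measurableSet_biUnion hF
  have hle : ∀ x, maximalFunction F g x ^ p ≤ (⋃ Q ∈ F, Q).indicator (fun _ => F.sup g ^ p) x :=
    fun x => by
      refine (ENNReal.rpow_le_rpow (maximalFunction_le_indicator x) hp.le).trans_eq ?_
      by_cases hx : x ∈ ⋃ Q ∈ F, Q <;> simp [hx, hp]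
  refine ne_top_of_le_ne_top ?_ (lintegral_mono hle)
  rw [lintegral_indicator_const hU]
  refine ENNReal.mul_ne_top (ENNReal.rpow_ne_top_of_nonneg hp.le ?_) ?_
  · exact (Finset.sup_lt_iff (by simp)).2 (fun Q hQ => (hg Q hQ).lt_top) |>.ne
  · exact ((measure_biUnion_finset_le F _).trans_lt
      (ENNReal.sum_lt_top.2 fun Q hQ => (hμ Q hQ).lt_top)).ne

lemma setLIntegral_ne_top_of_lintegral_rpow_ne_top {μ : Measure α}
    {f : α → ℝ≥0∞} {p : ℝ} (hp : 1 ≤ p) (hf : ∫⁻ x, f x ^ p ∂μ ≠ ∞)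
    {s : Set α} (hs : μ s ≠ ∞) : ∫⁻ x in s, f x ∂μ ≠ ∞ := by
  have hle (x : α) : f x ≤ f x ^ p + 1 := by
    rcases le_total (f x) 1 with h | h
    · exact le_add_left h
    · exact (by simpa using ENNReal.rpow_le_rpow_of_exponent_le h hp : f x ≤ f x ^ p).trans
        le_self_add
  refine ne_top_of_le_ne_top (ENNReal.add_ne_top.2 ⟨hf, hs⟩) ?_
  calc ∫⁻ x in s, f x ∂μ ≤ ∫⁻ x in s, (f x ^ p + 1) ∂μ := lintegral_mono hle
    _ = ∫⁻ x in s, f x ^ p ∂μ + μ s := by rw [lintegral_add_right _ measurable_const]; simp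
    _ ≤ ∫⁻ x, f x ^ p ∂μ + μ s := by gcongr; exact Measure.restrict_le_self

lemma lintegral_prod_rpow_mul_prod_rpow_le {ι : Type*} {μ : Measure α}
    (s : Finset ι) {M v : ι → α → ℝ≥0∞} (hM : ∀ i, Measurable (M i)) (hv : ∀ i, Measurable (v i))
    {p : ι → ℝ} {q : ℝ} (hp : ∀ i ∈ s, 0 < p i) (hq : 0 ≤ q) (hpq : ∑ i ∈ s, q / p i = 1) :
    ∫⁻ x, (∏ i ∈ s, M i x) ^ q * ∏ i ∈ s, v i x ^ (q / p i) ∂μ ≤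
      ∏ i ∈ s, (∫⁻ x, M i x ^ p i * v i x ∂μ) ^ (q / p i) := by
  have hx (x : α) : (∏ i ∈ s, M i x) ^ q * ∏ i ∈ s, v i x ^ (q / p i) =
      ∏ i ∈ s, (M i x ^ p i * v i x) ^ (q / p i) := by
    rw [← ENNReal.prod_rpow_of_nonneg hq, ← Finset.prod_mul_distrib]
    refine Finset.prod_congr rfl fun i hi => ?_
    rw [ENNReal.mul_rpow_of_nonneg _ _ (div_nonneg hq (hp i hi).le), ← ENNReal.rpow_mul,
      mul_div_cancel₀ _ (hp i hi).ne']
  simp_rw [hx]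
  exact ENNReal.lintegral_prod_norm_pow_le s (fun i _ => by fun_prop) hpq
    fun i hi => div_nonneg hq (hp i hi).le

variable {ν : Measure α} [SFinite ν] {p : ℝ} {M f : α → ℝ≥0∞}

lemma lintegral_rpow_le_conjExp_mul_of_weakType (hp : 1 < p) (hM : Measurable M)
    (hf : Measurable f)
    (hweak : ∀ t, t * ν {x | t < M x} ≤ ∫⁻ x in {x | t < M x}, f x ∂ν) :
    ∫⁻ x, M x ^ p ∂ν ≤ ENNReal.ofReal (conjExp p) * ∫⁻ x, f x * M x ^ (p - 1) ∂ν := by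
  have hp1 : 0 < p - 1 := by linarith
  have hlevel : ∀ t ∈ Ioi (0:ℝ), ν {x | ENNReal.ofReal t < M x} * ENNReal.ofReal (t ^ (p - 1)) ≤
      (∫⁻ x in {x | ENNReal.ofReal t < M x}, f x ∂ν) * ENNReal.ofReal (t ^ (p - 1 - 1)) := by
    intro t ht
    rw [show t ^ (p - 1) = t * t ^ (p - 1 - 1) by
        rw [← Real.rpow_one_add' ht.out.le (by linarith)]; ring_nf,
      ENNReal.ofReal_mul ht.out.le, ← mul_assoc, mul_comm _ (ENNReal.ofReal t)]
    exact mul_le_mul_left (hweak _) _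
  calc ∫⁻ x, M x ^ p ∂ν = ENNReal.ofReal p *
        ∫⁻ t in Ioi 0, ν {x | ENNReal.ofReal t < M x} * ENNReal.ofReal (t ^ (p - 1)) :=
      lintegral_rpow_eq_lintegral_measure_lt_mul ν (by linarith) hM
    _ ≤ ENNReal.ofReal p * ∫⁻ t in Ioi 0,
        (∫⁻ x in {x | ENNReal.ofReal t < M x}, f x ∂ν) * ENNReal.ofReal (t ^ (p - 1 - 1)) :=
      mul_le_mul_right (setLIntegral_mono' measurableSet_Ioi hlevel) _
    _ = ENNReal.ofReal p * (ENNReal.ofReal (p - 1))⁻¹ * ∫⁻ x, f x * M x ^ (p - 1) ∂ν := by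
      rw [lintegral_mul_rpow_eq_lintegral_setLIntegral ν hp1 hf hM, ← mul_assoc,
        mul_assoc (ENNReal.ofReal p), ENNReal.inv_mul_cancel (by simpa using hp1) ofReal_ne_top,
        mul_one]
    _ = ENNReal.ofReal (conjExp p) * ∫⁻ x, f x * M x ^ (p - 1) ∂ν := by
      rw [conjExp, ENNReal.ofReal_div_of_pos hp1, div_eq_mul_inv]

lemma lintegral_rpow_le_of_weakType (hp : 1 < p) (hM : Measurable M) (hf : Measurable f)
    (hfin : ∫⁻ x, M x ^ p ∂ν ≠ ∞)
    (hweak : ∀ t, t * ν {x | t < M x} ≤ ∫⁻ x in {x | t < M x}, f x ∂ν) :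
    ∫⁻ x, M x ^ p ∂ν ≤ ENNReal.ofReal (conjExp p) ^ p * ∫⁻ x, f x ^ p ∂ν := by
  set X := ∫⁻ x, M x ^ p ∂ν
  have hp0 : 0 < p := by linarith
  have hpq : p.HolderConjugate (conjExp p) := Real.HolderConjugate.conjExponent hp
  have hholder :
      ∫⁻ x, f x * M x ^ (p - 1) ∂ν ≤ (∫⁻ x, f x ^ p ∂ν) ^ (1 / p) * X ^ (1 / conjExp p) := by
    refine (ENNReal.lintegral_mul_le_Lp_mul_Lq ν hpq hf.aemeasurable (by fun_prop)).trans_eq ?_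
    simp_rw [← ENNReal.rpow_mul, show (p - 1) * conjExp p = p by
      rw [conjExp]; field_simp [(by linarith : p - 1 ≠ 0)]]
    rfl
  have hX : X ≤ (ENNReal.ofReal (conjExp p) * (∫⁻ x, f x ^ p ∂ν) ^ (1 / p)) * X ^ (1 / conjExp p) :=
    (lintegral_rpow_le_conjExp_mul_of_weakType hp hM hf hweak).trans
      (by rw [mul_assoc]; exact mul_le_mul_right hholder _)
  rcases eq_or_ne X 0 with hX0 | hX0
  · rw [hX0]; exact zero_le
  have hsplit : X = X ^ (1 / p) * X ^ (1 / conjExp p) := by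
    rw [← ENNReal.rpow_add _ _ hX0 hfin, one_div, one_div, hpq.inv_add_inv_eq_one, ENNReal.rpow_one]
  nth_rw 1 [hsplit] at hX
  rw [ENNReal.mul_le_mul_iff_left (by simp [hX0, hfin, hpq.symm.pos])
    (ENNReal.rpow_ne_top_of_nonneg (by simp [hpq.symm.nonneg]) hfin)] at hX
  calc X = (X ^ (1 / p)) ^ p := by
        rw [← ENNReal.rpow_mul, one_div_mul_cancel hp0.ne', ENNReal.rpow_one]
    _ ≤ (ENNReal.ofReal (conjExp p) * (∫⁻ x, f x ^ p ∂ν) ^ (1 / p)) ^ p := by gcongr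
    _ = ENNReal.ofReal (conjExp p) ^ p * ∫⁻ x, f x ^ p ∂ν := by
      rw [ENNReal.mul_rpow_of_nonneg _ _ hp0.le, ← ENNReal.rpow_mul, one_div_mul_cancel hp0.ne',
        ENNReal.rpow_one]

end LayerCake

section DyadicCovering

variable {n : ℕ}

lemma mul_measure_setOf_lt_maximalFunction_le {F : Finset (Set (Rn n))}
    (hF : ∀ Q ∈ F, IsDyadicCube Q) {ν ρ : Measure (Rn n)} {w : Set (Rn n) → ℝ≥0∞}
    (hw : ∀ Q ∈ F, w Q ≤ ρ Q / ν Q) (t : ℝ≥0∞) :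
    t * ν {x | t < maximalFunction F w x} ≤ ρ {x | t < maximalFunction F w x} := by
  classical
  set S := F.filter fun Q => t < w Q
  obtain ⟨S', hS'S, hdisj, hcover⟩ := exists_pairwiseDisjoint_subfamily_cover (S := S)
    fun Q hQ => hF Q (Finset.mem_filter.1 hQ).1
  have hmeas : ∀ R ∈ S', MeasurableSet R :=
    fun R hR => (hF R (Finset.mem_filter.1 (hS'S hR)).1).measurableSet
  have hsum (μ : Measure (Rn n)) : μ (⋃ R ∈ S', R) = ∑ R ∈ S', μ R :=
    measure_biUnion_finset hdisj hmeas
  rw [setOf_lt_maximalFunction, ← biUnion_eq_of_subset_of_forall_subset hS'S hcover, hsum, hsum,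
    Finset.mul_sum]
  refine Finset.sum_le_sum fun R hR => ENNReal.mul_le_of_le_div ?_
  obtain ⟨hRF, htR⟩ := Finset.mem_filter.1 (hS'S hR)
  exact htR.le.trans (hw R hRF)

lemma sum_le_mul_measure_biUnion_of_carleson {S : Finset (Set (Rn n))}
    (hS : ∀ Q ∈ S, IsDyadicCube Q) {G : Measure (Rn n)} {A : ℝ≥0∞} {a : Set (Rn n) → ℝ≥0∞}
    (hC : ∀ R, IsDyadicCube R → ∑' Q : {Q // IsDyadicCube Q ∧ Q ⊆ R}, a Q.1 ≤ A * G R) :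
    ∑ Q ∈ S, a Q ≤ A * G (⋃ Q ∈ S, Q) := by
  classical
  obtain ⟨S', hS'S, hdisj, hcover⟩ := exists_pairwiseDisjoint_subfamily_cover hS
  have hmeas : ∀ R ∈ S', MeasurableSet R := fun R hR => (hS R (hS'S hR)).measurableSet
  have hinR : ∀ R ∈ S', ∑ Q ∈ S.filter (· ⊆ R), a Q ≤ A * G R := fun R hR => by
    rw [← Finset.sum_subtype_of_mem a (p := fun Q => IsDyadicCube Q ∧ Q ⊆ R)
      fun Q hQ => ⟨hS Q (Finset.mem_filter.1 hQ).1, (Finset.mem_filter.1 hQ).2⟩]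
    exact (ENNReal.sum_le_tsum _).trans (hC R (hS R (hS'S hR)))
  calc ∑ Q ∈ S, a Q ≤ ∑ Q ∈ S, ∑ R ∈ S'.filter (Q ⊆ ·), a Q := Finset.sum_le_sum fun Q hQ => by
        obtain ⟨R, hR, hQR⟩ := hcover Q hQ
        exact Finset.single_le_sum (f := fun _ => a Q) (fun _ _ => zero_le)
          (Finset.mem_filter.2 ⟨hR, hQR⟩)
    _ = ∑ R ∈ S', ∑ Q ∈ S.filter (· ⊆ R), a Q :=
        Finset.sum_comm' fun Q R => by simp only [Finset.mem_filter]; tauto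
    _ ≤ ∑ R ∈ S', A * G R := Finset.sum_le_sum hinR
    _ = A * G (⋃ Q ∈ S, Q) := by
        rw [← Finset.mul_sum, ← biUnion_eq_of_subset_of_forall_subset hS'S hcover,
          measure_biUnion_finset (f := fun R => R) hdisj hmeas]

lemma sum_mul_rpow_le_of_carleson {F : Finset (Set (Rn n))}
    (hF : ∀ Q ∈ F, IsDyadicCube Q) {G : Measure (Rn n)} [SFinite G] {A : ℝ≥0∞}
    {a : Set (Rn n) → ℝ≥0∞}
    (hC : ∀ R, IsDyadicCube R → ∑' Q : {Q // IsDyadicCube Q ∧ Q ⊆ R}, a Q.1 ≤ A * G R)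
    (b : Set (Rn n) → ℝ≥0∞) {q : ℝ} (hq : 0 < q) :
    ∑ Q ∈ F, a Q * b Q ^ q ≤ A * ∫⁻ x, maximalFunction F b x ^ q ∂G := by
  classical
  have hlevel (t : ℝ) : ∑ Q ∈ F.filter (fun Q => ENNReal.ofReal t < b Q), a Q ≤
      A * G {x | ENNReal.ofReal t < maximalFunction F b x} := by
    rw [setOf_lt_maximalFunction]
    exact sum_le_mul_measure_biUnion_of_carleson (fun Q hQ => hF Q (Finset.mem_filter.1 hQ).1) hC
  calc ∑ Q ∈ F, a Q * b Q ^ q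
      ≤ ENNReal.ofReal q * ∫⁻ t in Ioi 0,
          A * G {x | ENNReal.ofReal t < maximalFunction F b x} * ENNReal.ofReal (t ^ (q - 1)) := by
        rw [sum_mul_rpow_eq_lintegral F a b hq]
        gcongr with t
        exact hlevel t
    _ = A * ∫⁻ x, maximalFunction F b x ^ q ∂G := by
        rw [lintegral_rpow_eq_lintegral_measure_lt_mul G hq
          (measurable_maximalFunction fun Q hQ => (hF Q hQ).measurableSet)]
        simp_rw [mul_assoc]
        have hanti : Antitone fun t : ℝ => G {x | ENNReal.ofReal t < maximalFunction F b x} :=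
          fun s t hst => measure_mono fun x hx => (ENNReal.ofReal_le_ofReal hst).trans_lt hx
        have hm : Measurable fun t : ℝ =>
            G {x | ENNReal.ofReal t < maximalFunction F b x} * ENNReal.ofReal (t ^ (q - 1)) :=
          hanti.measurable.mul (by fun_prop)
        rw [lintegral_const_mul _ hm]
        ring

lemma wAvg_eq_withDensity_div {Q : Set (Rn n)} (hQ : MeasurableSet Q) {σ f : Rn n → ℝ}
    (hσm : Measurable σ) (hf0 : ∀ x, 0 ≤ f x) (hfm : Measurable f) :
    wAvg Q σ f = (volume.withDensity fun x => ENNReal.ofReal (σ x)).withDensity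
      (fun x => ENNReal.ofReal (f x)) Q / volume.withDensity (fun x => ENNReal.ofReal (σ x)) Q := by
  rw [wAvg, withDensity_apply _ hQ, withDensity_apply _ hQ,
    setLIntegral_withDensity_eq_setLIntegral_mul _ (by fun_prop) (by fun_prop) hQ]
  simp_rw [Pi.mul_apply, setInt, ENNReal.ofReal_mul (hf0 _), mul_comm]

theorem lintegral_maximalFunction_wAvg_rpow_le {F : Finset (Set (Rn n))}
    (hF : ∀ Q ∈ F, IsDyadicCube Q) {p : ℝ} (hp : 1 < p) {σ f : Rn n → ℝ}
    (hσm : Measurable σ) (hσloc : LocallyIntegrable σ volume) (hf0 : ∀ x, 0 ≤ f x)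
    (hfm : Measurable f) (hfLp : ∫⁻ x, ENNReal.ofReal (f x) ^ p * ENNReal.ofReal (σ x) < ∞) :
    ∫⁻ x, maximalFunction F (fun Q => wAvg Q σ f) x ^ p * ENNReal.ofReal (σ x) ≤
      (ENNReal.ofReal (conjExp p) * nLpR p σ f) ^ p := by
  have hp0 : 0 < p := by linarith
  set ν := volume.withDensity fun x => ENNReal.ofReal (σ x)
  set ρ := ν.withDensity fun x => ENNReal.ofReal (f x)
  set M := maximalFunction F fun Q => wAvg Q σ f
  have hQm : ∀ Q ∈ F, MeasurableSet Q := fun Q hQ => (hF Q hQ).measurableSet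
  have hMm : Measurable M := measurable_maximalFunction hQm
  have hν {g : Rn n → ℝ≥0∞} (hg : Measurable g) :
      ∫⁻ x, g x * ENNReal.ofReal (σ x) = ∫⁻ x, g x ∂ν := by
    rw [lintegral_withDensity_eq_lintegral_mul _ (by fun_prop) hg]
    simp_rw [Pi.mul_apply, mul_comm]
  have hwAvg : ∀ Q ∈ F, wAvg Q σ f = ρ Q / ν Q :=
    fun Q hQ => wAvg_eq_withDensity_div (hQm Q hQ) hσm hf0 hfm
  have hνQ : ∀ Q ∈ F, ν Q ≠ ∞ := fun Q hQ => by
    rw [withDensity_apply _ (hQm Q hQ)]; exact (hF Q hQ).setInt_ne_top hσloc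
  have hfLp' : ∫⁻ x, ENNReal.ofReal (f x) ^ p ∂ν ≠ ∞ := by rw [← hν (by fun_prop)]; exact hfLp.ne
  have hwAvg_ne_top : ∀ Q ∈ F, wAvg Q σ f ≠ ∞ := fun Q hQ => by
    rw [hwAvg Q hQ]
    rcases eq_or_ne (ν Q) 0 with hν0 | hν0
    -- `ρ ≪ ν`, so the average is `0 / 0 = 0`
    · rw [withDensity_absolutelyContinuous ν _ hν0, hν0]; simp
    refine ENNReal.div_ne_top ?_ hν0
    rw [withDensity_apply _ (hQm Q hQ)]
    exact setLIntegral_ne_top_of_lintegral_rpow_ne_top hp.le hfLp' (hνQ Q hQ)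
  have hfin : ∫⁻ x, M x ^ p ∂ν ≠ ∞ := lintegral_maximalFunction_rpow_ne_top hQm hwAvg_ne_top hνQ hp0
  have hweak (t : ℝ≥0∞) :
      t * ν {x | t < M x} ≤ ∫⁻ x in {x | t < M x}, ENNReal.ofReal (f x) ∂ν := by
    rw [← withDensity_apply _ (measurableSet_lt measurable_const hMm)]
    exact mul_measure_setOf_lt_maximalFunction_le hF (fun Q hQ => (hwAvg Q hQ).le) t
  rw [nLpR, nLp, ENNReal.mul_rpow_of_nonneg _ _ hp0.le, ← ENNReal.rpow_mul,
    one_div_mul_cancel hp0.ne', ENNReal.rpow_one, hν (hMm.pow_const p), hν (by fun_prop)]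
  exact lintegral_rpow_le_of_weakType hp hMm (by fun_prop) hfin hweak

theorem sum_mul_prod_wAvg_rpow_le {m : ℕ} (p : Fin m → ℝ) (pp : ℝ)
    (hp : ∀ i, 1 < p i) (hpp : 1 / pp = ∑ i, 1 / p i) (hpp1 : 1 < pp)
    (σ : Fin m → Rn n → ℝ) (hσ0 : ∀ i x, 0 ≤ σ i x) (hσm : ∀ i, Measurable (σ i))
    (hσloc : ∀ i, LocallyIntegrable (σ i) volume)
    (A : ℝ≥0∞) (a : Set (Rn n) → ℝ≥0∞)
    (hCarleson : ∀ R : Set (Rn n), IsDyadicCube R →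
      (∑' Q : {Q : Set (Rn n) // IsDyadicCube Q ∧ Q ⊆ R}, a Q.1) ≤
        A * setInt R fun x => ∏ i, σ i x ^ (pp / p i))
    (f : Fin m → Rn n → ℝ) (hf0 : ∀ i x, 0 ≤ f i x) (hfm : ∀ i, Measurable (f i))
    (hfLp : ∀ i, (∫⁻ x, ENNReal.ofReal (f i x) ^ p i * ENNReal.ofReal (σ i x)) < ∞)
    {F : Finset (Set (Rn n))} (hF : ∀ Q ∈ F, IsDyadicCube Q) :
    ∑ Q ∈ F, a Q * (∏ i, wAvg Q (σ i) (f i)) ^ pp ≤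
      A * (∏ i, ENNReal.ofReal (conjExp (p i)) * nLpR (p i) (σ i) (f i)) ^ pp := by
  have hpp0 : 0 < pp := by linarith
  have hp0 (i : Fin m) : 0 < p i := by linarith [hp i]
  have hexp : ∑ i, pp / p i = 1 := by
    simp_rw [div_eq_mul_one_div pp, ← Finset.mul_sum, ← hpp, mul_one_div_cancel hpp0.ne']
  set G := volume.withDensity fun x => ENNReal.ofReal (∏ i, σ i x ^ (pp / p i))
  have hG (x : Rn n) : ENNReal.ofReal (∏ i, σ i x ^ (pp / p i)) =
      ∏ i, ENNReal.ofReal (σ i x) ^ (pp / p i) := by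
    rw [ENNReal.ofReal_prod_of_nonneg fun i _ => Real.rpow_nonneg (hσ0 i x) _]
    exact Finset.prod_congr rfl fun i _ =>
      (ENNReal.ofReal_rpow_of_nonneg (hσ0 i x) (div_nonneg hpp0.le (hp0 i).le)).symm
  have hC (R : Set (Rn n)) (hR : IsDyadicCube R) :
      ∑' Q : {Q // IsDyadicCube Q ∧ Q ⊆ R}, a Q.1 ≤ A * G R := by
    rw [withDensity_apply _ hR.measurableSet]; exact hCarleson R hR
  have hQm : ∀ Q ∈ F, MeasurableSet Q := fun Q hQ => (hF Q hQ).measurableSet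
  set Mi := fun i => maximalFunction F fun Q => wAvg Q (σ i) (f i)
  calc ∑ Q ∈ F, a Q * (∏ i, wAvg Q (σ i) (f i)) ^ pp
      ≤ A * ∫⁻ x, maximalFunction F (fun Q => ∏ i, wAvg Q (σ i) (f i)) x ^ pp ∂G :=
        sum_mul_rpow_le_of_carleson hF hC _ hpp0
    _ ≤ A * ∫⁻ x, (∏ i, Mi i x) ^ pp * ∏ i, ENNReal.ofReal (σ i x) ^ (pp / p i) := by
        rw [lintegral_withDensity_eq_lintegral_mul _ (by fun_prop)
          ((measurable_maximalFunction hQm).pow_const _)]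
        gcongr with x
        rw [Pi.mul_apply, hG, mul_comm]
        gcongr
        exact maximalFunction_prod_le _ _ x
    _ ≤ A * ∏ i, (∫⁻ x, Mi i x ^ p i * ENNReal.ofReal (σ i x)) ^ (pp / p i) := by
        gcongr
        exact lintegral_prod_rpow_mul_prod_rpow_le _ (fun i => measurable_maximalFunction hQm)
          (fun i => by fun_prop) (fun i _ => hp0 i) hpp0.le hexp
    _ ≤ A * ∏ i,
          ((ENNReal.ofReal (conjExp (p i)) * nLpR (p i) (σ i) (f i)) ^ p i) ^ (pp / p i) := by
        gcongr with i
        · exact div_nonneg hpp0.le (hp0 i).le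
        exact lintegral_maximalFunction_wAvg_rpow_le hF (hp i) (hσm i) (hσloc i) (hf0 i) (hfm i)
          (hfLp i)
    _ = A * (∏ i, ENNReal.ofReal (conjExp (p i)) * nLpR (p i) (σ i) (f i)) ^ pp := by
        simp_rw [← ENNReal.rpow_mul, mul_div_cancel₀ _ (hp0 _).ne']
        rw [ENNReal.prod_rpow_of_nonneg hpp0.le]

end DyadicCovering

theorem stmt1_general {n m : ℕ} (p : Fin m → ℝ) (pp : ℝ)
    (hp : ∀ i, 1 < p i) (hpp : 1 / pp = ∑ i, 1 / p i) (hpp1 : 1 < pp)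
    (σ : Fin m → Rn n → ℝ) (hσ0 : ∀ i x, 0 ≤ σ i x) (hσm : ∀ i, Measurable (σ i))
    (hσloc : ∀ i, LocallyIntegrable (σ i) volume)
    (A : ℝ≥0∞) (a : Set (Rn n) → ℝ≥0∞)
    (hCarleson : ∀ R : Set (Rn n), IsDyadicCube R →
      (∑' Q : {Q : Set (Rn n) // IsDyadicCube Q ∧ Q ⊆ R}, a Q.1) ≤
        A * setInt R fun x => ∏ i, σ i x ^ (pp / p i))
    (f : Fin m → Rn n → ℝ) (hf0 : ∀ i x, 0 ≤ f i x) (hfm : ∀ i, Measurable (f i))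
    (hfLp : ∀ i, (∫⁻ x, ENNReal.ofReal (f i x) ^ p i * ENNReal.ofReal (σ i x)) < ∞) :
    (∑' Q : {Q : Set (Rn n) // IsDyadicCube Q},
        a Q.1 * (∏ i, wAvg Q.1 (σ i) (f i)) ^ pp) ^ (1 / pp) ≤
      A ^ (1 / pp) * ∏ i, ENNReal.ofReal (conjExp (p i)) * nLpR (p i) (σ i) (f i) := by
  have hpp0 : 0 < pp := by linarith
  have hsum : ∑' Q : {Q : Set (Rn n) // IsDyadicCube Q},
      a Q.1 * (∏ i, wAvg Q.1 (σ i) (f i)) ^ pp ≤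
      A * (∏ i, ENNReal.ofReal (conjExp (p i)) * nLpR (p i) (σ i) (f i)) ^ pp := by
    refine ENNReal.summable.tsum_le_of_sum_le fun s => ?_
    refine (Finset.sum_map s (Function.Embedding.subtype _)
      fun Q => a Q * (∏ i, wAvg Q (σ i) (f i)) ^ pp).symm.trans_le ?_
    refine sum_mul_prod_wAvg_rpow_le p pp hp hpp hpp1 σ hσ0 hσm hσloc A a hCarleson f hf0 hfm hfLp
      fun Q hQ => ?_
    obtain ⟨Q', -, rfl⟩ := Finset.mem_map.1 hQ
    exact Q'.2
  calc _ ≤ (A * (∏ i, ENNReal.ofReal (conjExp (p i)) * nLpR (p i) (σ i) (f i)) ^ pp) ^ (1 / pp) :=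
        ENNReal.rpow_le_rpow hsum (by positivity)
    _ = _ := by
        rw [ENNReal.mul_rpow_of_nonneg _ _ (by positivity), ← ENNReal.rpow_mul,
          mul_one_div_cancel hpp0.ne', ENNReal.rpow_one]

/-- Multilinear Carleson embedding: full conclusion of Lemma 3.1. -/
theorem stmt1 {n m : ℕ} (hm : 0 < m) (p : Fin m → ℝ) (pp : ℝ)
    (hp : ∀ i, 1 < p i) (hpp : 1 / pp = ∑ i, 1 / p i) (hpp1 : 1 < pp)
    (σ : Fin m → Rn n → ℝ) (hσ0 : ∀ i x, 0 ≤ σ i x) (hσm : ∀ i, Measurable (σ i))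
    (hσloc : ∀ i, LocallyIntegrable (σ i) volume)
    (A : ℝ≥0∞) (a : Set (Rn n) → ℝ≥0∞)
    (hCarleson : ∀ R : Set (Rn n), IsDyadicCube R →
      (∑' Q : {Q : Set (Rn n) // IsDyadicCube Q ∧ Q ⊆ R}, a Q.1) ≤
        A * setInt R fun x => ∏ i, σ i x ^ (pp / p i))
    (f : Fin m → Rn n → ℝ) (hf0 : ∀ i x, 0 ≤ f i x) (hfm : ∀ i, Measurable (f i))
    (hfLp : ∀ i, (∫⁻ x, ENNReal.ofReal (f i x) ^ p i * ENNReal.ofReal (σ i x)) < ∞) :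
    (∑' Q : {Q : Set (Rn n) // IsDyadicCube Q},
        a Q.1 * (∏ i, wAvg Q.1 (σ i) (f i)) ^ pp) ^ (1 / pp) ≤
      A ^ (1 / pp) * ∏ i, ENNReal.ofReal (conjExp (p i)) * nLpR (p i) (σ i) (f i) :=
  stmt1_general p pp hp hpp hpp1 σ hσ0 hσm hσloc A a hCarleson f hf0 hfm hfLp
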